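/- Let ρ be an absolutely continuous probability measure on ℝ with density ρ, and for ε > 0 let ρ^ε be the probability measure on ℝ² with density ρ^ε(x¹,x²) = (2ε)^{-1} ρ(x¹) 1_{|x²| < ε}. Identify each point y_i ∈ ℝ with z_i = (y_i, 0) ∈ ℝ², and for ψ ∈ (0,∞)^N let RLag_i^{(2)}(ψ) = {x ∈ ℝ² : ‖x−z_i‖² − ψ_i ≤ ‖x−z_j‖² − ψ_j for all j, and ‖x−z_i‖² ≤ ψ_i} be the two-dimensional restricted Laguerre cells. Then for every i, ρ^ε(RLag_i^{(2)}(ψ)) = ∫_{Lag_i(ψ)} min(√(max(ψ_i − (x−y_i)², 0))/ε, 1) ρ(x) dx = G^ε_i(ψ); that is, the ρ^ε-mass of the two-dimensional restricted Laguerre cell equals the regularized mass of the corresponding one-dimensional Laguerre cell. -/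
import Mathlib


open MeasureTheory Real Filter Set

noncomputable section

/-- The (unrestricted) one-dimensional Laguerre cell of index `i`. -/
def Lag1 {N : ℕ} (y ψ : Fin N → ℝ) (i : Fin N) : Set ℝ :=
  {x : ℝ | ∀ j, (x - y i) ^ 2 - ψ i ≤ (x - y j) ^ 2 - ψ j}

/-- The regularized mass of the `i`-th one-dimensional Laguerre cell. -/
def Greg {N : ℕ} (y : Fin N → ℝ) (f : ℝ → ℝ) (ε : ℝ) (ψ : Fin N → ℝ) (i : Fin N) : ℝ :=
  ∫ x in Lag1 y ψ i, min (Real.sqrt (max (ψ i - (x - y i) ^ 2) 0) / ε) 1 * f x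

/-- The two-dimensional restricted Laguerre cell of index `i`, for the points
`z_i = (y_i, 0)` (Euclidean squared distances written explicitly). -/
def RLag2 {N : ℕ} (y : Fin N → ℝ) (ψ : Fin N → ℝ) (i : Fin N) : Set (ℝ × ℝ) :=
  {p : ℝ × ℝ |
    (∀ j, (p.1 - y i) ^ 2 + p.2 ^ 2 - ψ i ≤ (p.1 - y j) ^ 2 + p.2 ^ 2 - ψ j) ∧
    (p.1 - y i) ^ 2 + p.2 ^ 2 ≤ ψ i}

/-- The thickened measure `ρ^ε` on `ℝ²`, with density
`(2ε)⁻¹ ρ(x¹) 1_{|x²| < ε}` with respect to the Lebesgue measure. -/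
def thickMeas (f : ℝ → ℝ) (ε : ℝ) : Measure (ℝ × ℝ) :=
  (volume : Measure (ℝ × ℝ)).withDensity
    (fun p => ENNReal.ofReal ((2 * ε)⁻¹ * f p.1 * (if |p.2| < ε then 1 else 0)))

/-- Volume of the slice `{t : t² ≤ m} ∩ (-ε, ε)`. -/
lemma vol_slice (m ε : ℝ) (hε : 0 < ε) :
    volume ({t : ℝ | t ^ 2 ≤ m} ∩ Ioo (-ε) ε)
      = ENNReal.ofReal (2 * min (Real.sqrt (max m 0)) ε) := by
  rcases le_or_gt 0 m with hm | hm
  · have hs : {t : ℝ | t ^ 2 ≤ m} = Icc (-Real.sqrt m) (Real.sqrt m) := by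
      ext t
      simp only [mem_setOf_eq, mem_Icc, ← abs_le, ← Real.sqrt_sq_eq_abs,
        Real.sqrt_le_sqrt_iff hm]
    rw [hs, max_eq_left hm]
    rcases lt_or_ge (Real.sqrt m) ε with h | h
    · have hinter : Icc (-Real.sqrt m) (Real.sqrt m) ∩ Ioo (-ε) ε
          = Icc (-Real.sqrt m) (Real.sqrt m) := by
        apply inter_eq_left.mpr
        intro t ht
        rcases ht with ⟨h1, h2⟩
        exact ⟨lt_of_lt_of_le (by linarith) h1, lt_of_le_of_lt h2 h⟩
      rw [hinter, Real.volume_Icc, min_eq_left h.le]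
      ring_nf
    · have hinter : Icc (-Real.sqrt m) (Real.sqrt m) ∩ Ioo (-ε) ε = Ioo (-ε) ε := by
        apply inter_eq_right.mpr
        intro t ht
        rcases ht with ⟨h1, h2⟩
        exact ⟨by nlinarith, by linarith⟩
      rw [hinter, Real.volume_Ioo, min_eq_right h]
      ring_nf
  · have hs : {t : ℝ | t ^ 2 ≤ m} = (∅ : Set ℝ) := by
      ext t
      simp only [mem_setOf_eq, mem_empty_iff_false, iff_false, not_le]
      nlinarith [sq_nonneg t]
    rw [hs, empty_inter, measure_empty, max_eq_right hm.le, Real.sqrt_zero,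
      min_eq_left hε.le]
    norm_num

/-- the `ρ^ε`-mass of the two-dimensional restricted Laguerre cell equals
the regularized mass of the corresponding one-dimensional Laguerre cell. -/
theorem stmt19 {N : ℕ} (hN : 0 < N)
    (f : ℝ → ℝ) (hfm : Measurable f) (hf0 : ∀ x, 0 ≤ f x) (hfi : ∫ x, f x = 1)
    (y : Fin N → ℝ) (hy : StrictMono y)
    (ε : ℝ) (hε : 0 < ε) (ψ : Fin N → ℝ) (hψ : ∀ i, 0 < ψ i) :
    ∀ i, (thickMeas f ε (RLag2 y ψ i)).toReal = Greg y f ε ψ i := by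
  intro i
  set L := Lag1 y ψ i with hLdef
  set m : ℝ → ℝ := fun x => ψ i - (x - y i) ^ 2 with hmdef
  -- the density
  set g : ℝ × ℝ → ENNReal :=
    fun p => ENNReal.ofReal ((2 * ε)⁻¹ * f p.1 * (if |p.2| < ε then 1 else 0)) with hgdef
  -- rewrite the 2D cell
  have hS : RLag2 y ψ i = {p : ℝ × ℝ | p.1 ∈ L ∧ p.2 ^ 2 ≤ m p.1} := by
    ext p
    simp only [RLag2, hLdef, Lag1, mem_setOf_eq, hmdef]
    constructor
    · rintro ⟨h1, h2⟩
      exact ⟨fun j => by have := h1 j; linarith, by linarith⟩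
    · rintro ⟨h1, h2⟩
      exact ⟨fun j => by have := h1 j; linarith, by linarith⟩
  -- measurability of the 1D cell
  have hLmeas : MeasurableSet L := by
    have : L = ⋂ j, {x : ℝ | (x - y i) ^ 2 - ψ i ≤ (x - y j) ^ 2 - ψ j} := by
      ext x; simp [hLdef, Lag1, mem_iInter]
    rw [this]
    exact MeasurableSet.iInter fun j =>
      measurableSet_le (by fun_prop) (by fun_prop)
  -- measurability of the 2D cell
  have hSmeas : MeasurableSet (RLag2 y ψ i) := by
    rw [hS]
    have : {p : ℝ × ℝ | p.1 ∈ L ∧ p.2 ^ 2 ≤ m p.1}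
        = (Prod.fst ⁻¹' L) ∩ {p : ℝ × ℝ | p.2 ^ 2 ≤ m p.1} := rfl
    rw [this]
    exact (hLmeas.preimage measurable_fst).inter
      (measurableSet_le (by fun_prop) (by fun_prop))
  -- measurability of the density
  have hgm : Measurable g := by
    apply ENNReal.measurable_ofReal.comp
    apply Measurable.mul
    · exact (measurable_const.mul (hfm.comp measurable_fst))
    · exact Measurable.ite (measurableSet_lt (by fun_prop) measurable_const)
        measurable_const measurable_const
  -- the key slice computation
  have key : ∀ x : ℝ, (∫⁻ t, (RLag2 y ψ i).indicator g (x, t))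
      = L.indicator (fun x =>
          ENNReal.ofReal (min (Real.sqrt (max (m x) 0) / ε) 1 * f x)) x := by
    intro x
    by_cases hx : x ∈ L
    · rw [indicator_of_mem hx]
      have h1 : ∀ t : ℝ, (RLag2 y ψ i).indicator g (x, t)
          = ({t : ℝ | t ^ 2 ≤ m x} ∩ Ioo (-ε) ε).indicator
              (fun _ => ENNReal.ofReal ((2 * ε)⁻¹ * f x)) t := by
        intro t
        rw [hS]
        by_cases ht : t ^ 2 ≤ m x
        · have hmem : ((x, t) : ℝ × ℝ) ∈ {p : ℝ × ℝ | p.1 ∈ L ∧ p.2 ^ 2 ≤ m p.1} := ⟨hx, ht⟩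
          by_cases ht2 : |t| < ε
          · have hmem2 : t ∈ {t : ℝ | t ^ 2 ≤ m x} ∩ Ioo (-ε) ε :=
              ⟨ht, mem_Ioo.mpr (abs_lt.mp ht2)⟩
            rw [indicator_of_mem hmem, indicator_of_mem hmem2]
            simp [hgdef, ht2]
          · have hmem2 : t ∉ {t : ℝ | t ^ 2 ≤ m x} ∩ Ioo (-ε) ε :=
              fun h => ht2 (abs_lt.mpr (mem_Ioo.mp h.2))
            rw [indicator_of_mem hmem, indicator_of_notMem hmem2]
            simp [hgdef, ht2]
        · have hmem : ((x, t) : ℝ × ℝ) ∉ {p : ℝ × ℝ | p.1 ∈ L ∧ p.2 ^ 2 ≤ m p.1} :=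
            fun h => ht h.2
          have hmem2 : t ∉ {t : ℝ | t ^ 2 ≤ m x} ∩ Ioo (-ε) ε := fun h => ht h.1
          rw [indicator_of_notMem hmem, indicator_of_notMem hmem2]
      rw [lintegral_congr h1,
        lintegral_indicator ((measurableSet_le (by fun_prop : Measurable fun t : ℝ => t ^ 2)
            measurable_const).inter measurableSet_Ioo),
        setLIntegral_const, vol_slice (m x) ε hε,
        ← ENNReal.ofReal_mul (mul_nonneg (by positivity) (hf0 x))]
      congr 1
      have hmin : min (Real.sqrt (max (m x) 0) / ε) 1
          = min (Real.sqrt (max (m x) 0)) ε / ε := by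
        rw [← min_div_div_right hε.le, div_self hε.ne']
      rw [hmin]
      field_simp
    · rw [indicator_of_notMem hx]
      have h0 : ∀ t : ℝ, (RLag2 y ψ i).indicator g (x, t) = 0 := by
        intro t
        rw [hS]
        exact indicator_of_notMem (fun h => hx h.1) _
      rw [lintegral_congr h0, lintegral_zero]
  -- assemble
  have hmass : thickMeas f ε (RLag2 y ψ i)
      = ∫⁻ x in L, ENNReal.ofReal (min (Real.sqrt (max (m x) 0) / ε) 1 * f x) := by
    rw [thickMeas, withDensity_apply _ hSmeas,
      ← lintegral_indicator hSmeas, Measure.volume_eq_prod,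
      lintegral_prod _ ((hgm.indicator hSmeas).aemeasurable),
      lintegral_congr key, lintegral_indicator hLmeas]
  have hGreg : Greg y f ε ψ i
      = (∫⁻ x in L, ENNReal.ofReal (min (Real.sqrt (max (m x) 0) / ε) 1 * f x)).toReal := by
    rw [Greg, integral_eq_lintegral_of_nonneg_ae]
    · exact Eventually.of_forall fun x =>
        mul_nonneg (le_min (by positivity) zero_le_one) (hf0 x)
    · exact (Measurable.mul (by fun_prop) hfm).aestronglyMeasurable
  rw [hmass, hGreg]
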